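/- Consider the discrete-time system X(k+1) = 𝒟(X(k)), 𝒟(X) = Σ_{i=0}^{N} Jᵢ X Jᵢᵀ, and suppose there exists a symmetric positive definite matrix P and a constant α₃ > 0 such that 𝒟*(P) − P ⪯ −α₃ I. Then along any solution with X₀ ∈ 𝕊ⁿ_{⪰0}, the function V(X) = ⟨P, X⟩ satisfies V(X(k+1)) − V(X(k)) ≤ −(α₃/λ_max(P)) V(X(k)) for all k. -/

import Mathlib

/-!
The maps `𝒟` and `𝒟*` are adjoint for the trace pairing, so
`V(X(k+1)) - V(X(k)) = tr((𝒟*(P) - P) X(k)) ≤ -α₃ tr X(k)`, because `A ↦ tr(A X)` is monotone in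
the Loewner order when `X ⪰ 0`, and `𝒟` preserves positive semidefiniteness. The same
monotonicity applied to `P ⪯ λ_max(P) I` gives `V(X(k)) ≤ λ_max(P) tr X(k)`.
-/

open Matrix BigOperators

noncomputable def frob {n : ℕ} (A B : Matrix (Fin n) (Fin n) ℝ) : ℝ := (A * Bᵀ).trace

lemma frob_eq_trace_mul {n : ℕ} (A : Matrix (Fin n) (Fin n) ℝ) {B : Matrix (Fin n) (Fin n) ℝ}
    (hB : B.IsSymm) : frob A B = (A * B).trace := by
  rw [frob, hB.eq]

open scoped MatrixOrder

namespace Matrix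

variable {m ι : Type*} [Fintype m]

lemma trace_mul_sum_mul_mul_transpose {R : Type*} [CommRing R] (P X : Matrix m m R)
    (J : ι → Matrix m m R) (s : Finset ι) :
    (P * ∑ i ∈ s, J i * X * (J i)ᵀ).trace = ((∑ i ∈ s, (J i)ᵀ * P * J i) * X).trace := by
  simp only [Matrix.mul_sum, Finset.sum_mul, trace_sum, ← Matrix.mul_assoc]
  refine Finset.sum_congr rfl fun i _ => ?_
  rw [trace_mul_comm, ← Matrix.mul_assoc, ← Matrix.mul_assoc]

lemma PosSemidef.sum_mul_mul_transpose {X : Matrix m m ℝ} (hX : X.PosSemidef)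
    (J : ι → Matrix m m ℝ) (s : Finset ι) : (∑ i ∈ s, J i * X * (J i)ᵀ).PosSemidef :=
  Finset.sum_induction _ _ (fun _ _ => .add) .zero fun i _ => by
    simpa using hX.mul_mul_conjTranspose_same (J i)

variable {𝕜 : Type*} [RCLike 𝕜]

open scoped ComplexOrder in
lemma PosSemidef.trace_mul_nonneg {A B : Matrix m m 𝕜} (hA : A.PosSemidef)
    (hB : B.PosSemidef) : 0 ≤ (A * B).trace := by
  classical
  obtain ⟨C, rfl⟩ := CStarAlgebra.nonneg_iff_eq_star_mul_self.mp hA.nonneg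
  rw [← trace_mul_cycle]
  exact (hB.mul_mul_conjTranspose_same C).trace_nonneg

open scoped ComplexOrder in
lemma trace_mul_le_trace_mul_of_le {A B X : Matrix m m 𝕜} (hAB : A ≤ B)
    (hX : X.PosSemidef) : (A * X).trace ≤ (B * X).trace := by
  simpa [sub_mul, trace_sub] using (le_iff.mp hAB).trace_mul_nonneg hX

lemma IsHermitian.le_smul_one_of_eigenvalues_le [DecidableEq m] {A : Matrix m m 𝕜}
    (hA : A.IsHermitian) {c : ℝ} (hc : ∀ i, hA.eigenvalues i ≤ c) : A ≤ c • 1 := by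
  rw [← Algebra.algebraMap_eq_smul_one]
  refine le_algebraMap_of_spectrum_le (fun x hx => ?_) hA
  obtain ⟨i, rfl⟩ := hA.spectrum_real_eq_range_eigenvalues ▸ hx
  exact hc i

lemma PosSemidef.trace_mul_le_iSup_eigenvalues_mul_trace [DecidableEq m] {P X : Matrix m m ℝ}
    (hP : P.IsHermitian) (hX : X.PosSemidef) :
    (P * X).trace ≤ (⨆ i, hP.eigenvalues i) * X.trace := by
  have hle := hP.le_smul_one_of_eigenvalues_le
    (le_ciSup (Set.finite_range hP.eigenvalues).bddAbove)
  simpa [smul_mul, trace_smul] using trace_mul_le_trace_mul_of_le hle hX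

lemma PosSemidef.trace_mul_div_iSup_eigenvalues_le_trace [DecidableEq m] {P X : Matrix m m ℝ}
    (hP : P.PosSemidef) (hX : X.PosSemidef) :
    (P * X).trace / (⨆ i, hP.1.eigenvalues i) ≤ X.trace := by
  obtain hzero | hpos := (Real.iSup_nonneg hP.eigenvalues_nonneg).eq_or_lt
  · simpa [← hzero] using hX.trace_nonneg
  · exact (div_le_iff₀' hpos).mpr (hX.trace_mul_le_iSup_eigenvalues_mul_trace hP.1)

end Matrix

theorem discrete_lyapunov_decrease {n N : ℕ}
    (J : ℕ → Matrix (Fin n) (Fin n) ℝ) (P : Matrix (Fin n) (Fin n) ℝ)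
    (hP : P.PosDef) (α₃ : ℝ) (hα₃ : 0 < α₃)
    (hLyap : ((-α₃) • (1 : Matrix (Fin n) (Fin n) ℝ) -
        ((∑ i ∈ Finset.range (N + 1), (J i)ᵀ * P * J i) - P)).PosSemidef)
    (X : ℕ → Matrix (Fin n) (Fin n) ℝ) (hX0 : (X 0).PosSemidef)
    (hrec : ∀ k, X (k + 1) = ∑ i ∈ Finset.range (N + 1), J i * X k * (J i)ᵀ) :
    ∀ k, frob P (X (k + 1)) - frob P (X k) ≤
      -(α₃ / (⨆ i, hP.1.eigenvalues i)) * frob P (X k) := by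
  have hX : ∀ k, (X k).PosSemidef :=
    Nat.rec hX0 fun k ih => hrec k ▸ ih.sum_mul_mul_transpose J _
  have hfrob : ∀ k, frob P (X k) = (P * X k).trace := fun k =>
    frob_eq_trace_mul P (isHermitian_iff_isSymm.mp (hX k).1)
  intro k
  have hdecay : ((∑ i ∈ Finset.range (N + 1), (J i)ᵀ * P * J i) * X k).trace -
      (P * X k).trace ≤ -α₃ * (X k).trace := by
    simpa [sub_mul, smul_mul, trace_sub, trace_smul] using
      trace_mul_le_trace_mul_of_le (le_iff.mpr hLyap) (hX k)
  have hratio := mul_le_mul_of_nonneg_left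
    (hP.posSemidef.trace_mul_div_iSup_eigenvalues_le_trace (hX k)) hα₃.le
  rw [hfrob, hfrob, hrec k, trace_mul_sum_mul_mul_transpose]
  calc _ ≤ -α₃ * (X k).trace := hdecay
    _ ≤ -(α₃ * ((P * X k).trace / ⨆ i, hP.1.eigenvalues i)) := by linarith
    _ = _ := by ring
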